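/- There exists a constant C > 0 such that every disk graph G on n ≥ 2 vertices satisfies χ_s(G) ≤ C · (log₂ n)³. -/

import Mathlib

/-- A `k`-subcoloring of a simple graph `G`: every color class induces a
disjoint union of cliques. -/
def IsSubcoloring {V : Type*} {k : ℕ} (G : SimpleGraph V) (μ : V → Fin k) : Prop :=
  ∀ u v w : V, μ u = μ v → μ v = μ w → G.Adj u v → G.Adj v w → u ≠ w → G.Adj u w

namespace DiskSub

local notation "Pt" => EuclideanSpace ℝ (Fin 2)

variable {V : Type}

/-- Partial subcoloring data: colors `< k` on `F`, classes P3-free within `F`. -/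
def GoodOn (G : SimpleGraph V) (F : Finset V) (μ : V → ℕ) (k : ℕ) : Prop :=
  (∀ v ∈ F, μ v < k) ∧
    ∀ u ∈ F, ∀ v ∈ F, ∀ w ∈ F, μ u = μ v → μ v = μ w →
      G.Adj u v → G.Adj v w → u ≠ w → G.Adj u w

lemma GoodOn.mono_k {G : SimpleGraph V} {F : Finset V} {μ : V → ℕ} {k k' : ℕ}
    (h : GoodOn G F μ k) (hk : k ≤ k') : GoodOn G F μ k' :=
  ⟨fun v hv => lt_of_lt_of_le (h.1 v hv) hk, h.2⟩

lemma goodOn_card_le_one {G : SimpleGraph V} {F : Finset V} (h : F.card ≤ 1) :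
    GoodOn G F (fun _ => 0) 1 :=
  ⟨fun _ _ => one_pos, fun u hu _ _ w hw _ _ _ _ hne =>
    absurd (Finset.card_le_one.mp h u hu w hw) hne⟩

lemma goodOn_clique {G : SimpleGraph V} {F : Finset V} {μ : V → ℕ} {k : ℕ}
    (hlt : ∀ v ∈ F, μ v < k)
    (hcl : ∀ u ∈ F, ∀ v ∈ F, μ u = μ v → u ≠ v → G.Adj u v) :
    GoodOn G F μ k :=
  ⟨hlt, fun u hu _ _ w hw h1 h2 _ _ hne => hcl u hu w hw (h1.trans h2) hne⟩

lemma goodOn_combine [DecidableEq V] {G : SimpleGraph V} {F S A B : Finset V}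
    {μS μA μB : V → ℕ} {kS k : ℕ}
    (hcov : ∀ v ∈ F, v ∈ S ∨ v ∈ A ∨ v ∈ B)
    (hAB : ∀ a ∈ A, ∀ b ∈ B, ¬ G.Adj a b)
    (hS : GoodOn G S μS kS) (hA : GoodOn G A μA k) (hB : GoodOn G B μB k) :
    GoodOn G F
      (fun v => if v ∈ S then μS v else if v ∈ A then kS + μA v else kS + μB v)
      (kS + k) := by
  classical
  set μ : V → ℕ :=
    fun v => if v ∈ S then μS v else if v ∈ A then kS + μA v else kS + μB v with hμ
  have hcase : ∀ x ∈ F, (x ∈ S ∧ μ x = μS x) ∨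
      (x ∉ S ∧ x ∈ A ∧ μ x = kS + μA x) ∨
      (x ∉ S ∧ x ∉ A ∧ x ∈ B ∧ μ x = kS + μB x) := by
    intro x hx
    by_cases hxS : x ∈ S
    · exact Or.inl ⟨hxS, by simp [hμ, hxS]⟩
    by_cases hxA : x ∈ A
    · exact Or.inr (Or.inl ⟨hxS, hxA, by simp [hμ, hxS, hxA]⟩)
    · have hxB : x ∈ B := by rcases hcov x hx with h | h | h <;> tauto
      exact Or.inr (Or.inr ⟨hxS, hxA, hxB, by simp [hμ, hxS, hxA]⟩)
  constructor
  · intro v hv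
    rcases hcase v hv with ⟨hvS, he⟩ | ⟨_, hvA, he⟩ | ⟨_, _, hvB, he⟩
    · exact he ▸ lt_of_lt_of_le (hS.1 v hvS) (Nat.le_add_right _ _)
    · exact he ▸ Nat.add_lt_add_left (hA.1 v hvA) kS
    · exact he ▸ Nat.add_lt_add_left (hB.1 v hvB) kS
  · intro u hu v hv w hw huv hvw hadj1 hadj2 hne
    rcases hcase v hv with ⟨hvS, hev⟩ | ⟨hvS, hvA, hev⟩ | ⟨hvS, hvA, hvB, hev⟩
    · -- color < kS, so u,w ∈ S
      have hcol : μ v < kS := hev ▸ hS.1 v hvS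
      have hUS : ∀ x ∈ F, μ x = μ v → x ∈ S ∧ μ x = μS x := by
        intro x hx hcx
        rcases hcase x hx with ⟨h1, h2⟩ | ⟨_, _, h2⟩ | ⟨_, _, _, h2⟩
        · exact ⟨h1, h2⟩
        · omega
        · omega
      obtain ⟨huS, heu⟩ := hUS u hu huv
      obtain ⟨hwS, hew⟩ := hUS w hw hvw.symm
      exact hS.2 u huS v hvS w hwS (by omega) (by omega) hadj1 hadj2 hne
    · -- v in A-part
      have hInA : ∀ x ∈ F, μ x = μ v → G.Adj x v ∨ G.Adj v x → x ∈ A ∧ μ x = kS + μA x := by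
        intro x hx hcx hadjx
        rcases hcase x hx with ⟨h1, h2⟩ | ⟨_, h1, h2⟩ | ⟨_, _, h1, h2⟩
        · exfalso; have := hS.1 x h1; omega
        · exact ⟨h1, h2⟩
        · exfalso
          rcases hadjx with h | h
          · exact hAB v hvA x h1 h.symm
          · exact hAB v hvA x h1 h
      obtain ⟨huA, heu⟩ := hInA u hu huv (Or.inl hadj1)
      obtain ⟨hwA, hew⟩ := hInA w hw hvw.symm (Or.inr hadj2)
      exact hA.2 u huA v hvA w hwA (by omega) (by omega) hadj1 hadj2 hne
    · have hInB : ∀ x ∈ F, μ x = μ v → G.Adj x v ∨ G.Adj v x → x ∈ B ∧ μ x = kS + μB x := by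
        intro x hx hcx hadjx
        rcases hcase x hx with ⟨h1, h2⟩ | ⟨_, h1, h2⟩ | ⟨_, _, h1, h2⟩
        · exfalso; have := hS.1 x h1; omega
        · exfalso
          rcases hadjx with h | h
          · exact hAB x h1 v hvB h
          · exact hAB x h1 v hvB h.symm
        · exact ⟨h1, h2⟩
      obtain ⟨huB, heu⟩ := hInB u hu huv (Or.inl hadj1)
      obtain ⟨hwB, hew⟩ := hInB w hw hvw.symm (Or.inr hadj2)
      exact hB.2 u huB v hvB w hwB (by omega) (by omega) hadj1 hadj2 hne

/-- Median: a threshold with at most half strictly below and at most half strictly above. -/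
lemma exists_median (F : Finset V) (l : V → ℝ) :
    ∃ x0 : ℝ, 2 * (F.filter fun v => l v < x0).card ≤ F.card ∧
              2 * (F.filter fun v => x0 < l v).card ≤ F.card := by
  classical
  rcases F.eq_empty_or_nonempty with rfl | hne
  · exact ⟨0, by simp⟩
  set T' : Finset ℝ :=
    (F.image l).filter (fun x => F.card ≤ 2 * (F.filter fun v => l v ≤ x).card) with hT'
  have hT'ne : T'.Nonempty := by
    refine ⟨(F.image l).max' (hne.image l), ?_⟩
    rw [hT', Finset.mem_filter]
    refine ⟨Finset.max'_mem _ _, ?_⟩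
    have : F.filter (fun v => l v ≤ (F.image l).max' (hne.image l)) = F := by
      apply Finset.filter_true_of_mem
      intro v hv
      exact Finset.le_max' _ _ (Finset.mem_image_of_mem l hv)
    rw [this]; omega
  set x0 := T'.min' hT'ne with hx0
  have hx0mem : x0 ∈ T' := Finset.min'_mem _ _
  have hprop : F.card ≤ 2 * (F.filter fun v => l v ≤ x0).card := by
    rw [hT', Finset.mem_filter] at hx0mem; exact hx0mem.2
  refine ⟨x0, ?_, ?_⟩
  · by_contra hc
    push_neg at hc
    set W := F.filter (fun v => l v < x0) with hW
    have hWne : W.Nonempty := by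
      rw [← Finset.card_pos]
      have := Finset.card_le_card (Finset.filter_subset (fun v => l v < x0) F)
      omega
    set x1 := (W.image l).max' (hWne.image l) with hx1
    obtain ⟨w1, hw1W, hw1⟩ := Finset.mem_image.mp ((W.image l).max'_mem (hWne.image l))
    have hw1F : w1 ∈ F := (Finset.filter_subset _ F) hw1W
    have hx1lt : x1 < x0 := by
      rw [hx1, ← hw1]
      exact (Finset.mem_filter.mp hw1W).2
    have hWsub : W ⊆ F.filter (fun v => l v ≤ x1) := by
      intro v hv
      rw [Finset.mem_filter]
      refine ⟨(Finset.filter_subset _ F) hv, ?_⟩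
      exact Finset.le_max' _ _ (Finset.mem_image_of_mem l hv)
    have hx1T' : x1 ∈ T' := by
      rw [hT', Finset.mem_filter]
      refine ⟨by rw [hx1, ← hw1]; exact Finset.mem_image_of_mem l hw1F, ?_⟩
      have := Finset.card_le_card hWsub
      omega
    have := Finset.min'_le T' x1 hx1T'
    rw [← hx0] at this
    linarith
  · have hsplit : (F.filter fun v => x0 < l v) = F \ (F.filter fun v => l v ≤ x0) := by
      ext v
      simp only [Finset.mem_filter, Finset.mem_sdiff, not_and, not_le]
      constructor
      · rintro ⟨h1, h2⟩; exact ⟨h1, fun _ => h2⟩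
      · rintro ⟨h1, h2⟩; exact ⟨h1, h2 h1⟩
    rw [hsplit, Finset.card_sdiff_of_subset (Finset.filter_subset _ _)]
    have := Finset.card_le_card (Finset.filter_subset (fun v => l v ≤ x0) F)
    omega


lemma coord_dist_le (x y : Pt) (i : Fin 2) : |x i - y i| ≤ dist x y := by
  rw [EuclideanSpace.dist_eq, ← Real.dist_eq]
  have h1 : dist (x i) (y i) = Real.sqrt (dist (x i) (y i) ^ 2) :=
    (Real.sqrt_sq dist_nonneg).symm
  rw [h1]
  apply Real.sqrt_le_sqrt
  exact Finset.single_le_sum (f := fun j => dist (x j) (y j) ^ 2)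
    (fun j _ => sq_nonneg _) (Finset.mem_univ i)

lemma dist_sq_eq (x y : Pt) :
    dist x y ^ 2 = (x 0 - y 0) ^ 2 + (x 1 - y 1) ^ 2 := by
  rw [EuclideanSpace.dist_eq, Real.sq_sqrt (by positivity)]
  simp [Fin.sum_univ_two, Real.dist_eq, sq_abs]

lemma dist_le_of_coords {x y : Pt} {a : ℝ} (h0 : |x 0 - y 0| ≤ a) (h1 : |x 1 - y 1| ≤ a)
    (ha : 0 ≤ a) {s : ℝ} (hs : 2 * a ^ 2 ≤ s ^ 2) (hs' : 0 ≤ s) : dist x y ≤ s := by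
  have h := dist_sq_eq x y
  have b0 : (x 0 - y 0) ^ 2 ≤ a ^ 2 := by nlinarith [abs_nonneg (x 0 - y 0), sq_abs (x 0 - y 0)]
  have b1 : (x 1 - y 1) ^ 2 ≤ a ^ 2 := by nlinarith [abs_nonneg (x 1 - y 1), sq_abs (x 1 - y 1)]
  nlinarith [dist_nonneg (x := x) (y := y)]

lemma floor_eq_abs_lt {s a b : ℝ} (hs : 0 < s) (h : ⌊a / s⌋ = ⌊b / s⌋) : |a - b| < s := by
  have h1 : |a / s - b / s| < 1 := Int.abs_sub_lt_one_of_floor_eq_floor h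
  have h2 : a / s - b / s = (a - b) / s := by ring
  rw [h2, abs_div, abs_of_pos hs, div_lt_one hs] at h1
  exact h1

lemma floor_range {M s x : ℝ} (hs : 0 < s) (hx : |x| ≤ M) {N : ℤ} (hN : M ≤ N * s) :
    -N ≤ ⌊x / s⌋ ∧ ⌊x / s⌋ ≤ N := by
  have habs := abs_le.mp hx
  constructor
  · rw [Int.le_floor]
    push_cast
    rw [le_div_iff₀ hs]
    nlinarith
  · have : x / s ≤ (N : ℝ) := by
      rw [div_le_iff₀ hs]
      linarith
    calc ⌊x / s⌋ ≤ ⌊(N : ℝ)⌋ := Int.floor_mono this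
    _ = N := Int.floor_intCast N

set_option maxHeartbeats 1000000 in
lemma stab_clique_cover {V : Type} (c : V → Pt) (r : V → ℝ) (hr : ∀ v, 0 < r v)
    (z : Pt) (ρ : ℝ) (F : Finset V)
    (hcross : ∀ v ∈ F, |c v 0 - z 0| ≤ r v ∧ |c v 1 - z 1| ≤ r v)
    (hstab : ∀ v ∈ F, dist (c v) z - r v ≤ ρ ∧ ρ ≤ dist (c v) z + r v) :
    ∃ f : V → ℕ, (∀ v ∈ F, f v < 7947) ∧
      ∀ u ∈ F, ∀ v ∈ F, f u = f v → u ≠ v → dist (c u) (c v) ≤ r u + r v := by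
  classical
  by_cases hρ : ρ ≤ 0
  · refine ⟨fun _ => 0, fun v _ => by norm_num, ?_⟩
    intro u hu v hv _ _
    have h1 := (hstab u hu).1
    have h2 := (hstab v hv).1
    have ht := dist_triangle (c u) z (c v)
    rw [dist_comm z (c v)] at ht
    linarith
  push_neg at hρ
  set p : V → Pt := fun v => z + ((6 * ρ) / dist (c v) z) • (c v - z) with hp
  have hpcoord : ∀ (v : V) (i : Fin 2),
      p v i - z i = (6 * ρ / dist (c v) z) * (c v i - z i) := by
    intro v i
    simp only [hp, PiLp.add_apply, PiLp.smul_apply, PiLp.sub_apply, smul_eq_mul]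
    ring
  set f : V → ℕ := fun v =>
    if r v ≤ 10 * ρ then
      (⌊(c v 0 - z 0) / (ρ / 4)⌋ + 44).toNat + 89 * (⌊(c v 1 - z 1) / (ρ / 4)⌋ + 44).toNat
    else if dist (c v) z ≤ 7 * ρ then 7921
    else 7922 + ((⌊(p v 0 - z 0) / (3 * ρ)⌋ + 2).toNat
        + 5 * (⌊(p v 1 - z 1) / (3 * ρ)⌋ + 2).toNat) with hf

  have hEsm : ∀ v, r v ≤ 10 * ρ → f v =
      (⌊(c v 0 - z 0) / (ρ / 4)⌋ + 44).toNat + 89 * (⌊(c v 1 - z 1) / (ρ / 4)⌋ + 44).toNat := by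
    intro v h; simp only [hf, if_pos h]
  have hEmid : ∀ v, ¬ (r v ≤ 10 * ρ) → dist (c v) z ≤ 7 * ρ → f v = 7921 := by
    intro v h1 h2; simp only [hf, if_neg h1, if_pos h2]
  have hElg : ∀ v, ¬ (r v ≤ 10 * ρ) → ¬ (dist (c v) z ≤ 7 * ρ) → f v =
      7922 + ((⌊(p v 0 - z 0) / (3 * ρ)⌋ + 2).toNat
        + 5 * (⌊(p v 1 - z 1) / (3 * ρ)⌋ + 2).toNat) := by
    intro v h1 h2; simp only [hf, if_neg h1, if_neg h2]
  -- basic per-vertex facts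
  have htle : ∀ v ∈ F, dist (c v) z ≤ ρ + r v := fun v hv => by linarith [(hstab v hv).1]
  have hrlow : ∀ v ∈ F, 2 * ρ ≤ 5 * r v := by
    intro v hv
    have h2 := (hstab v hv).2
    have ha := (hcross v hv).1
    have hb := (hcross v hv).2
    have hsq := dist_sq_eq (c v) z
    have htnn : (0:ℝ) ≤ dist (c v) z := dist_nonneg
    have ht2 : dist (c v) z ^ 2 ≤ 2 * r v ^ 2 := by
      nlinarith [sq_abs (c v 0 - z 0), sq_abs (c v 1 - z 1), abs_nonneg (c v 0 - z 0),
        abs_nonneg (c v 1 - z 1), (hr v).le]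
    have ht15 : dist (c v) z ≤ 1.5 * r v := by nlinarith [(hr v).le]
    linarith
  -- floor ranges: small branch
  have hsmall_rng : ∀ v ∈ F, r v ≤ 10 * ρ → ∀ i : Fin 2,
      -44 ≤ ⌊(c v i - z i) / (ρ / 4)⌋ ∧ ⌊(c v i - z i) / (ρ / 4)⌋ ≤ 44 := by
    intro v hv hsm i
    have habs : |c v i - z i| ≤ 11 * ρ :=
      le_trans (coord_dist_le (c v) z i) (by linarith [htle v hv])
    exact floor_range (by linarith) habs (N := 44) (by push_cast; linarith)
  have hsmall_le : ∀ v ∈ F, r v ≤ 10 * ρ → f v ≤ 7920 := by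
    intro v hv hsm
    have h0 := hsmall_rng v hv hsm 0
    have h1 := hsmall_rng v hv hsm 1
    rw [hEsm v hsm]
    omega
  -- large branch facts
  have hlarge_rng : ∀ v ∈ F, ¬ (dist (c v) z ≤ 7 * ρ) → ∀ i : Fin 2,
      -2 ≤ ⌊(p v i - z i) / (3 * ρ)⌋ ∧ ⌊(p v i - z i) / (3 * ρ)⌋ ≤ 2 := by
    intro v hv hbig i
    push_neg at hbig
    have ht0 : (0:ℝ) < dist (c v) z := by linarith
    have habs : |p v i - z i| ≤ 6 * ρ := by
      rw [hpcoord v i, abs_mul, abs_of_pos (by positivity)]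
      have h1 : |c v i - z i| ≤ dist (c v) z := coord_dist_le (c v) z i
      calc 6 * ρ / dist (c v) z * |c v i - z i|
          ≤ 6 * ρ / dist (c v) z * dist (c v) z := by
            apply mul_le_mul_of_nonneg_left h1 (by positivity)
        _ = 6 * ρ := by field_simp
    exact floor_range (by linarith) habs (N := 2) (by push_cast; linarith)
  have hlarge_val : ∀ v ∈ F, ¬ (r v ≤ 10 * ρ) → ¬ (dist (c v) z ≤ 7 * ρ) →
      7922 ≤ f v ∧ f v ≤ 7946 := by
    intro v hv h1 h2
    have h0' := hlarge_rng v hv h2 0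
    have h1' := hlarge_rng v hv h2 1
    rw [hElg v h1 h2]
    omega
  have hdistp : ∀ v ∈ F, ¬ (dist (c v) z ≤ 7 * ρ) →
      dist (c v) (p v) = dist (c v) z - 6 * ρ := by
    intro v hv hbig
    push_neg at hbig
    have ht0 : (0:ℝ) < dist (c v) z := by linarith
    have hcpv : c v - p v = (1 - 6 * ρ / dist (c v) z) • (c v - z) := by
      rw [hp]
      simp only []
      rw [sub_smul, one_smul]
      abel
    rw [dist_eq_norm, hcpv, norm_smul, Real.norm_eq_abs]
    have hs1 : 6 * ρ / dist (c v) z < 1 := by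
      rw [div_lt_one ht0]; linarith
    rw [abs_of_nonneg (by linarith), ← dist_eq_norm]
    field_simp
  refine ⟨f, ?_, ?_⟩
  · intro v hv
    by_cases h1 : r v ≤ 10 * ρ
    · have := hsmall_le v hv h1; omega
    by_cases h2 : dist (c v) z ≤ 7 * ρ
    · rw [hEmid v h1 h2]; norm_num
    · have := hlarge_val v hv h1 h2; omega
  · intro u hu v hv hfe hne
    by_cases h1u : r u ≤ 10 * ρ <;> by_cases h1v : r v ≤ 10 * ρ
    · -- both small
      have hru : 2 * ρ ≤ 5 * r u := hrlow u hu
      have hrv : 2 * ρ ≤ 5 * r v := hrlow v hv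
      have h0u := hsmall_rng u hu h1u 0
      have h1u' := hsmall_rng u hu h1u 1
      have h0v := hsmall_rng v hv h1v 0
      have h1v' := hsmall_rng v hv h1v 1
      rw [hEsm u h1u, hEsm v h1v] at hfe
      have hfl0 : ⌊(c u 0 - z 0) / (ρ / 4)⌋ = ⌊(c v 0 - z 0) / (ρ / 4)⌋ := by omega
      have hfl1 : ⌊(c u 1 - z 1) / (ρ / 4)⌋ = ⌊(c v 1 - z 1) / (ρ / 4)⌋ := by omega
      clear hfe
      have hd0 : |c u 0 - c v 0| < ρ / 4 := by
        have := floor_eq_abs_lt (by linarith : (0:ℝ) < ρ / 4) hfl0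
        have he : c u 0 - z 0 - (c v 0 - z 0) = c u 0 - c v 0 := by ring
        rwa [he] at this
      have hd1 : |c u 1 - c v 1| < ρ / 4 := by
        have := floor_eq_abs_lt (by linarith : (0:ℝ) < ρ / 4) hfl1
        have he : c u 1 - z 1 - (c v 1 - z 1) = c u 1 - c v 1 := by ring
        rwa [he] at this
      have hs8 : 0.8 * ρ ≤ r u + r v := by linarith
      have hsq : (0.8 * ρ) * (0.8 * ρ) ≤ (r u + r v) * (r u + r v) :=
        mul_le_mul hs8 hs8 (by linarith) (by linarith)
      exact dist_le_of_coords (a := ρ / 4) (s := r u + r v) hd0.le hd1.le (by linarith)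
        (by nlinarith) (by linarith [(hr u).le, (hr v).le])
    · -- u small, v large: impossible
      exfalso
      have h1 := hsmall_le u hu h1u
      by_cases h2v : dist (c v) z ≤ 7 * ρ
      · rw [hEmid v h1v h2v] at hfe; omega
      · have := hlarge_val v hv h1v h2v; omega
    · exfalso
      have h1 := hsmall_le v hv h1v
      by_cases h2u : dist (c u) z ≤ 7 * ρ
      · rw [hEmid u h1u h2u] at hfe; omega
      · have := hlarge_val u hu h1u h2u; omega
    · -- both large radius
      by_cases h2u : dist (c u) z ≤ 7 * ρ <;> by_cases h2v : dist (c v) z ≤ 7 * ρ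
      · -- both near z
        push_neg at h1u h1v
        have ht := dist_triangle (c u) z (c v)
        rw [dist_comm z (c v)] at ht
        linarith
      · exfalso
        rw [hEmid u h1u h2u] at hfe
        have := hlarge_val v hv h1v h2v; omega
      · exfalso
        rw [hEmid v h1v h2v] at hfe
        have := hlarge_val u hu h1u h2u; omega
      · -- both outer: grid on projected points
        push_neg at h1u h1v
        have h0u := hlarge_rng u hu h2u 0
        have h1u' := hlarge_rng u hu h2u 1
        have h0v := hlarge_rng v hv h2v 0
        have h1v' := hlarge_rng v hv h2v 1
        rw [hElg u (not_le.mpr h1u) h2u, hElg v (not_le.mpr h1v) h2v] at hfe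
        have hfl0 : ⌊(p u 0 - z 0) / (3 * ρ)⌋ = ⌊(p v 0 - z 0) / (3 * ρ)⌋ := by omega
        have hfl1 : ⌊(p u 1 - z 1) / (3 * ρ)⌋ = ⌊(p v 1 - z 1) / (3 * ρ)⌋ := by omega
        clear hfe
        have hd0 : |p u 0 - p v 0| < 3 * ρ := by
          have := floor_eq_abs_lt (by linarith : (0:ℝ) < 3 * ρ) hfl0
          have he : p u 0 - z 0 - (p v 0 - z 0) = p u 0 - p v 0 := by ring
          rwa [he] at this
        have hd1 : |p u 1 - p v 1| < 3 * ρ := by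
          have := floor_eq_abs_lt (by linarith : (0:ℝ) < 3 * ρ) hfl1
          have he : p u 1 - z 1 - (p v 1 - z 1) = p u 1 - p v 1 := by ring
          rwa [he] at this
        have hdpp : dist (p u) (p v) ≤ 5 * ρ :=
          dist_le_of_coords (a := 3 * ρ) (s := 5 * ρ) hd0.le hd1.le (by linarith)
            (by nlinarith) (by linarith)
        have hcu := hdistp u hu h2u
        have hcv := hdistp v hv h2v
        have htr : dist (c u) (c v) ≤
            dist (c u) (p u) + dist (p u) (p v) + dist (p v) (c v) :=
          dist_triangle4 (c u) (p u) (p v) (c v)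
        rw [hcu, dist_comm (p v) (c v), hcv] at htr
        have h1 := htle u hu
        have h2 := htle v hv
        linarith


lemma balls_inter_iff {x y : Pt} {a b : ℝ} (ha : 0 < a) (hb : 0 < b) :
    (Metric.closedBall x a ∩ Metric.closedBall y b).Nonempty ↔ dist x y ≤ a + b := by
  constructor
  · rintro ⟨z, hzx, hzy⟩
    rw [Metric.mem_closedBall] at hzx hzy
    calc dist x y ≤ dist x z + dist z y := dist_triangle _ _ _
    _ ≤ a + b := by rw [dist_comm x z]; linarith
  · intro hd
    refine ⟨x + (a / (a + b)) • (y - x), ?_, ?_⟩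
    · rw [Metric.mem_closedBall, dist_eq_norm]
      have : x + (a / (a + b)) • (y - x) - x = (a / (a + b)) • (y - x) := by abel
      rw [this, norm_smul]
      rw [Real.norm_eq_abs, abs_of_nonneg (by positivity)]
      have hn : ‖y - x‖ = dist x y := by rw [dist_eq_norm, norm_sub_rev]
      rw [hn]
      rw [div_mul_eq_mul_div, div_le_iff₀ (by linarith)]
      nlinarith [dist_nonneg (x := x) (y := y)]
    · rw [Metric.mem_closedBall, dist_eq_norm]
      have : x + (a / (a + b)) • (y - x) - y = (a / (a + b) - 1) • (y - x) := by
        rw [sub_smul, one_smul]; abel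
      rw [this, norm_smul, Real.norm_eq_abs]
      have he : a / (a + b) - 1 = -(b / (a + b)) := by field_simp; ring
      rw [he, abs_neg, abs_of_nonneg (by positivity)]
      have hn : ‖y - x‖ = dist x y := by rw [dist_eq_norm, norm_sub_rev]
      rw [hn, div_mul_eq_mul_div, div_le_iff₀ (by linarith)]
      nlinarith [dist_nonneg (x := x) (y := y)]

lemma L3 {V : Type} [DecidableEq V] (G : SimpleGraph V) (c : V → Pt) (r : V → ℝ)
    (hr : ∀ v, 0 < r v)
    (hadj : ∀ u v : V, u ≠ v → (G.Adj u v ↔ dist (c u) (c v) ≤ r u + r v))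
    (z : Pt) :
    ∀ m : ℕ, ∀ F : Finset V,
      (∀ v ∈ F, |c v 0 - z 0| ≤ r v ∧ |c v 1 - z 1| ≤ r v) →
      F.card ≤ 2 ^ m →
      ∃ μ : V → ℕ, GoodOn G F μ (7947 * (m + 1)) := by
  intro m
  induction m with
  | zero =>
    intro F hF hcard
    exact ⟨fun _ => 0, (goodOn_card_le_one (by simpa using hcard)).mono_k (by norm_num)⟩
  | succ m ih =>
    intro F hF hcard
    obtain ⟨ρ, hmedA, hmedB⟩ := exists_median F (fun v => dist (c v) z - r v)
    set S := F.filter (fun v => dist (c v) z - r v ≤ ρ ∧ ρ ≤ dist (c v) z + r v) with hSdef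
    set A := F.filter (fun v => dist (c v) z + r v < ρ) with hAdef
    set B := F.filter (fun v => ρ < dist (c v) z - r v) with hBdef
    obtain ⟨fS, hfS1, hfS2⟩ := stab_clique_cover c r hr z ρ S
      (fun v hv => hF v (Finset.filter_subset _ _ hv))
      (fun v hv => (Finset.mem_filter.mp hv).2)
    have hGoodS : GoodOn G S fS 7947 := goodOn_clique hfS1 (fun u hu v hv hfe hne =>
      (hadj u v hne).mpr (hfS2 u hu v hv hfe hne))
    have h2pow : 2 ^ (m + 1) = 2 * 2 ^ m := by ring
    have hcardA : A.card ≤ 2 ^ m := by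
      have hsub : A ⊆ F.filter (fun v => dist (c v) z - r v < ρ) := by
        intro v hv
        rw [hAdef, Finset.mem_filter] at hv
        rw [Finset.mem_filter]
        exact ⟨hv.1, by linarith [hr v, hv.2]⟩
      have h1 := Finset.card_le_card hsub
      omega
    have hcardB : B.card ≤ 2 ^ m := by
      omega
    obtain ⟨μA, hμA⟩ := ih A (fun v hv => hF v (Finset.filter_subset _ _ hv)) hcardA
    obtain ⟨μB, hμB⟩ := ih B (fun v hv => hF v (Finset.filter_subset _ _ hv)) hcardB
    have hcov : ∀ v ∈ F, v ∈ S ∨ v ∈ A ∨ v ∈ B := by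
      intro v hv
      by_cases h1 : dist (c v) z + r v < ρ
      · exact Or.inr (Or.inl (Finset.mem_filter.mpr ⟨hv, h1⟩))
      by_cases h2 : ρ < dist (c v) z - r v
      · exact Or.inr (Or.inr (Finset.mem_filter.mpr ⟨hv, h2⟩))
      · push_neg at h1 h2
        exact Or.inl (Finset.mem_filter.mpr ⟨hv, h2, h1⟩)
    have hAB : ∀ a ∈ A, ∀ b ∈ B, ¬ G.Adj a b := by
      intro a ha b hb hadj'
      rw [hAdef, Finset.mem_filter] at ha
      rw [hBdef, Finset.mem_filter] at hb
      have hne : a ≠ b := by rintro rfl; linarith [ha.2, hb.2, hr a]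
      have hd := (hadj a b hne).mp hadj'
      have ht : dist (c b) z ≤ dist (c b) (c a) + dist (c a) z := dist_triangle _ _ _
      rw [dist_comm (c b) (c a)] at ht
      linarith [ha.2, hb.2]
    exact ⟨_, (goodOn_combine hcov hAB hGoodS hμA hμB).mono_k (by omega)⟩

lemma L2 {V : Type} [DecidableEq V] (G : SimpleGraph V) (c : V → Pt) (r : V → ℝ)
    (hr : ∀ v, 0 < r v)
    (hadj : ∀ u v : V, u ≠ v → (G.Adj u v ↔ dist (c u) (c v) ≤ r u + r v))
    (x0 : ℝ) :
    ∀ m : ℕ, ∀ F : Finset V,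
      (∀ v ∈ F, |c v 0 - x0| ≤ r v) →
      F.card ≤ 2 ^ m →
      ∃ μ : V → ℕ, GoodOn G F μ (7947 * (m + 1) ^ 2) := by
  intro m
  induction m with
  | zero =>
    intro F hF hcard
    exact ⟨fun _ => 0, (goodOn_card_le_one (by simpa using hcard)).mono_k (by norm_num)⟩
  | succ m ih =>
    intro F hF hcard
    obtain ⟨y0, hmedA, hmedB⟩ := exists_median F (fun v => c v 1 - r v)
    set z : Pt := (WithLp.equiv 2 (∀ _ : Fin 2, ℝ)).symm ![x0, y0] with hzdef
    have hz0 : z 0 = x0 := by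
      rw [hzdef, WithLp.equiv_symm_apply, PiLp.toLp_apply]
      simp
    have hz1 : z 1 = y0 := by
      rw [hzdef, WithLp.equiv_symm_apply, PiLp.toLp_apply]
      simp
    set S := F.filter (fun v => c v 1 - r v ≤ y0 ∧ y0 ≤ c v 1 + r v) with hSdef
    set A := F.filter (fun v => c v 1 + r v < y0) with hAdef
    set B := F.filter (fun v => y0 < c v 1 - r v) with hBdef
    have hcardS : S.card ≤ 2 ^ (m + 1) :=
      le_trans (Finset.card_le_card (Finset.filter_subset _ _)) hcard
    obtain ⟨μS, hμS⟩ := L3 G c r hr hadj z (m + 1) S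
      (by
        intro v hv
        rw [hSdef, Finset.mem_filter] at hv
        refine ⟨hz0 ▸ hF v hv.1, hz1 ▸ ?_⟩
        rw [abs_le]
        constructor <;> [linarith [hv.2.2]; linarith [hv.2.1]])
      hcardS
    have h2pow : 2 ^ (m + 1) = 2 * 2 ^ m := by ring
    have hcardA : A.card ≤ 2 ^ m := by
      have hsub : A ⊆ F.filter (fun v => c v 1 - r v < y0) := by
        intro v hv
        rw [hAdef, Finset.mem_filter] at hv
        rw [Finset.mem_filter]
        exact ⟨hv.1, by linarith [hr v, hv.2]⟩
      have h1 := Finset.card_le_card hsub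
      omega
    have hcardB : B.card ≤ 2 ^ m := by
      omega
    obtain ⟨μA, hμA⟩ := ih A (fun v hv => hF v (Finset.filter_subset _ _ hv)) hcardA
    obtain ⟨μB, hμB⟩ := ih B (fun v hv => hF v (Finset.filter_subset _ _ hv)) hcardB
    have hcov : ∀ v ∈ F, v ∈ S ∨ v ∈ A ∨ v ∈ B := by
      intro v hv
      by_cases h1 : c v 1 + r v < y0
      · exact Or.inr (Or.inl (Finset.mem_filter.mpr ⟨hv, h1⟩))
      by_cases h2 : y0 < c v 1 - r v
      · exact Or.inr (Or.inr (Finset.mem_filter.mpr ⟨hv, h2⟩))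
      · push_neg at h1 h2
        exact Or.inl (Finset.mem_filter.mpr ⟨hv, h2, h1⟩)
    have hAB : ∀ a ∈ A, ∀ b ∈ B, ¬ G.Adj a b := by
      intro a ha b hb hadj'
      rw [hAdef, Finset.mem_filter] at ha
      rw [hBdef, Finset.mem_filter] at hb
      have hne : a ≠ b := by rintro rfl; linarith [ha.2, hb.2, hr a]
      have hd := (hadj a b hne).mp hadj'
      have hcoord := coord_dist_le (c a) (c b) 1
      have habs := (abs_le.mp hcoord).1
      linarith [ha.2, hb.2]
    refine ⟨_, (goodOn_combine hcov hAB hμS hμA hμB).mono_k ?_⟩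
    have h1 : (m + 1 + 1) ≤ 2 * (m + 1) + 1 := by omega
    calc 7947 * (m + 1 + 1) + 7947 * (m + 1) ^ 2
        ≤ 7947 * (2 * (m + 1) + 1) + 7947 * (m + 1) ^ 2 :=
          Nat.add_le_add_right (Nat.mul_le_mul_left _ h1) _
      _ = 7947 * (m + 1 + 1) ^ 2 := by ring

lemma L1 {V : Type} [DecidableEq V] (G : SimpleGraph V) (c : V → Pt) (r : V → ℝ)
    (hr : ∀ v, 0 < r v)
    (hadj : ∀ u v : V, u ≠ v → (G.Adj u v ↔ dist (c u) (c v) ≤ r u + r v)) :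
    ∀ m : ℕ, ∀ F : Finset V,
      F.card ≤ 2 ^ m →
      ∃ μ : V → ℕ, GoodOn G F μ (7947 * (m + 1) ^ 3) := by
  intro m
  induction m with
  | zero =>
    intro F hcard
    exact ⟨fun _ => 0, (goodOn_card_le_one (by simpa using hcard)).mono_k (by norm_num)⟩
  | succ m ih =>
    intro F hcard
    obtain ⟨x0, hmedA, hmedB⟩ := exists_median F (fun v => c v 0 - r v)
    set S := F.filter (fun v => c v 0 - r v ≤ x0 ∧ x0 ≤ c v 0 + r v) with hSdef
    set A := F.filter (fun v => c v 0 + r v < x0) with hAdef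
    set B := F.filter (fun v => x0 < c v 0 - r v) with hBdef
    have hcardS : S.card ≤ 2 ^ (m + 1) :=
      le_trans (Finset.card_le_card (Finset.filter_subset _ _)) hcard
    obtain ⟨μS, hμS⟩ := L2 G c r hr hadj x0 (m + 1) S
      (by
        intro v hv
        rw [hSdef, Finset.mem_filter] at hv
        rw [abs_le]
        constructor <;> [linarith [hv.2.2]; linarith [hv.2.1]])
      hcardS
    have h2pow : 2 ^ (m + 1) = 2 * 2 ^ m := by ring
    have hcardA : A.card ≤ 2 ^ m := by
      have hsub : A ⊆ F.filter (fun v => c v 0 - r v < x0) := by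
        intro v hv
        rw [hAdef, Finset.mem_filter] at hv
        rw [Finset.mem_filter]
        exact ⟨hv.1, by linarith [hr v, hv.2]⟩
      have h1 := Finset.card_le_card hsub
      omega
    have hcardB : B.card ≤ 2 ^ m := by
      omega
    obtain ⟨μA, hμA⟩ := ih A hcardA
    obtain ⟨μB, hμB⟩ := ih B hcardB
    have hcov : ∀ v ∈ F, v ∈ S ∨ v ∈ A ∨ v ∈ B := by
      intro v hv
      by_cases h1 : c v 0 + r v < x0
      · exact Or.inr (Or.inl (Finset.mem_filter.mpr ⟨hv, h1⟩))
      by_cases h2 : x0 < c v 0 - r v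
      · exact Or.inr (Or.inr (Finset.mem_filter.mpr ⟨hv, h2⟩))
      · push_neg at h1 h2
        exact Or.inl (Finset.mem_filter.mpr ⟨hv, h2, h1⟩)
    have hAB : ∀ a ∈ A, ∀ b ∈ B, ¬ G.Adj a b := by
      intro a ha b hb hadj'
      rw [hAdef, Finset.mem_filter] at ha
      rw [hBdef, Finset.mem_filter] at hb
      have hne : a ≠ b := by rintro rfl; linarith [ha.2, hb.2, hr a]
      have hd := (hadj a b hne).mp hadj'
      have hcoord := coord_dist_le (c a) (c b) 0
      have habs := (abs_le.mp hcoord).1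
      linarith [ha.2, hb.2]
    refine ⟨_, (goodOn_combine hcov hAB hμS hμA hμB).mono_k ?_⟩
    have h1 : (m + 1 + 1) ^ 2 ≤ 3 * (m + 1) ^ 2 + 3 * (m + 1) + 1 := by
      have e : (m + 1 + 1) ^ 2 = (m + 1) ^ 2 + 2 * (m + 1) + 1 := by ring
      rw [e]
      generalize (m + 1) ^ 2 = a
      omega
    calc 7947 * (m + 1 + 1) ^ 2 + 7947 * (m + 1) ^ 3
        ≤ 7947 * (3 * (m + 1) ^ 2 + 3 * (m + 1) + 1) + 7947 * (m + 1) ^ 3 :=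
          Nat.add_le_add_right (Nat.mul_le_mul_left _ h1) _
      _ = 7947 * (m + 1 + 1) ^ 3 := by ring

end DiskSub

/-- There exists a constant `C > 0` such that every disk graph on `n ≥ 2`
vertices has subchromatic number at most `C · (log₂ n)³`. -/
theorem diskGraph_subchromatic_le_polylog :
    ∃ C : ℝ, 0 < C ∧
      ∀ (V : Type) [Fintype V] (G : SimpleGraph V)
        (c : V → EuclideanSpace ℝ (Fin 2)) (r : V → ℝ),
        (∀ v, 0 < r v) →
        (∀ u v : V, u ≠ v → (G.Adj u v ↔
          (Metric.closedBall (c u) (r u) ∩ Metric.closedBall (c v) (r v)).Nonempty)) →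
        2 ≤ Fintype.card V →
        ∃ (k : ℕ) (μ : V → Fin k), IsSubcoloring G μ ∧
          (k : ℝ) ≤ C * (Real.logb 2 (Fintype.card V)) ^ 3 := by
  classical
  refine ⟨27 * 7947, by norm_num, ?_⟩
  intro V _ G c r hr hG hcard
  set n := Fintype.card V with hn
  have hadj : ∀ u v : V, u ≠ v → (G.Adj u v ↔ dist (c u) (c v) ≤ r u + r v) := by
    intro u v hne
    rw [hG u v hne, DiskSub.balls_inter_iff (hr u) (hr v)]
  set m := Nat.clog 2 n with hm
  have hcard2 : (Finset.univ : Finset V).card ≤ 2 ^ m := by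
    rw [Finset.card_univ, ← hn]
    exact Nat.le_pow_clog one_lt_two n
  obtain ⟨μ, hμ⟩ := DiskSub.L1 G c r hr hadj m Finset.univ hcard2
  refine ⟨7947 * (m + 1) ^ 3, fun v => ⟨μ v, hμ.1 v (Finset.mem_univ v)⟩, ?_, ?_⟩
  · intro u v w h1 h2 ha1 ha2 hne
    have e1 : μ u = μ v := congrArg Fin.val h1
    have e2 : μ v = μ w := congrArg Fin.val h2
    exact hμ.2 u (Finset.mem_univ u) v (Finset.mem_univ v) w (Finset.mem_univ w)
      e1 e2 ha1 ha2 hne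
  · -- numeric bound
    have hL1 : (1 : ℝ) ≤ Real.logb 2 n := by
      have h2 : (2:ℝ) ≤ (n:ℝ) := by exact_mod_cast hcard
      have := Real.logb_le_logb_of_le (by norm_num : (1:ℝ) < 2) (by norm_num : (0:ℝ) < 2) h2
      simpa [Real.logb_self_eq_one (show (1:ℝ) < 2 by norm_num)] using this
    have hm1 : (m : ℝ) ≤ Real.logb 2 n + 1 := by
      rcases Nat.lt_or_ge m 2 with hm2 | hm2
      · have : (m : ℝ) ≤ 1 := by exact_mod_cast Nat.lt_succ_iff.mp hm2
        linarith
      · have h1n : 1 < n := by omega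
        have hpow := Nat.pow_pred_clog_lt_self (one_lt_two) h1n
        have hpow' : (2 : ℝ) ^ (m - 1) < (n : ℝ) := by
          rw [hm]
          exact_mod_cast hpow
        have h1m : 1 ≤ m := by omega
        have hlog := Real.logb_lt_logb (by norm_num : (1:ℝ) < 2) (by positivity) hpow'
        rw [Real.logb_pow, Real.logb_self_eq_one (by norm_num : (1:ℝ) < 2)] at hlog
        rw [Nat.cast_sub h1m] at hlog
        push_cast at hlog
        linarith
    have hm3 : ((m : ℝ) + 1) ≤ 3 * Real.logb 2 n := by linarith
    have hcube : ((m : ℝ) + 1) ^ 3 ≤ 27 * (Real.logb 2 n) ^ 3 := by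
      have h1 : (0:ℝ) ≤ (m : ℝ) + 1 := by positivity
      calc ((m : ℝ) + 1) ^ 3 ≤ (3 * Real.logb 2 n) ^ 3 := by
            apply pow_le_pow_left₀ h1 hm3
      _ = 27 * (Real.logb 2 n) ^ 3 := by ring
    push_cast
    nlinarith [hcube]
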